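/- For every ρ > 0 there is a constant C such that for all t ∈ (0,1], Σ_{k₁≠0, k₂≠0 in ℤ³} exp(−t(|k₁|² + |k₂|² + |k₁+k₂|²)) / ( |k₁|² |k₂|² (|k₁|² + |k₂|² + |k₁+k₂|²) ) ≤ C t^{−ρ}. -/

import Mathlib

open scoped ENNReal NNReal BigOperators
open MeasureTheory

noncomputable section

/-- Fourier coefficient representation of a periodic distribution on the torus `𝕋^d`. -/
abbrev Coef (d : ℕ) := (Fin d → ℤ) → ℂ

/-- Euclidean norm of a lattice point. -/
def knorm {d : ℕ} (k : Fin d → ℤ) : ℝ := Real.sqrt (∑ i, ((k i : ℝ)) ^ 2)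

/-- The function on the torus with Fourier coefficients `c`. -/
def toFun {d : ℕ} (c : Coef d) : (Fin d → ℝ) → ℂ :=
  fun x => ∑' k : Fin d → ℤ, c k * Complex.exp (Complex.I * (∑ i, (k i : ℝ) * x i))

/-- `L^∞` norm. -/
def linf {d : ℕ} (c : Coef d) : ℝ≥0∞ := ⨆ x : Fin d → ℝ, (‖toFun c x‖₊ : ℝ≥0∞)

/-- Littlewood–Paley multiplier: `n = 0` corresponds to the block `Δ_{-1}` (multiplier `χ`),
and `n = j + 1` to `Δ_j`, `j ≥ 0` (multiplier `θ(2^{-j}·)`). -/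
def lpMult (χ θ : ℝ → ℝ) (n : ℕ) (r : ℝ) : ℝ :=
  if n = 0 then χ r else θ ((2 : ℝ) ^ (-((n : ℝ) - 1)) * r)

/-- Littlewood–Paley block `Δ_{n-1}`. -/
def block {d : ℕ} (χ θ : ℝ → ℝ) (n : ℕ) (c : Coef d) : Coef d :=
  fun k => (lpMult χ θ n (knorm k) : ℂ) * c k

/-- Besov–Hölder norm `‖·‖_{C^α} = ‖·‖_{B^α_{∞,∞}}`. -/
def hnorm {d : ℕ} (χ θ : ℝ → ℝ) (α : ℝ) (c : Coef d) : ℝ≥0∞ :=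
  ⨆ n : ℕ, ENNReal.ofReal ((2 : ℝ) ^ (((n : ℝ) - 1) * α)) * linf (block χ θ n c)

/-- Convolution of coefficients, i.e. the coefficients of the product of the two functions. -/
def conv {d : ℕ} (a b : Coef d) : Coef d := fun k => ∑' m : Fin d → ℤ, a m * b (k - m)

/-- `S_{j-1} u = Σ_{i < j-1} Δ_i u` (with `n = j + 1`). -/
def lowSum {d : ℕ} (χ θ : ℝ → ℝ) (n : ℕ) (c : Coef d) : Coef d :=
  fun k => ∑ m ∈ Finset.range (n - 1), block χ θ m c k

/-- Bony paraproduct `π_<(u,v) = Σ_j S_{j-1} u Δ_j v`. -/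
def paraLT {d : ℕ} (χ θ : ℝ → ℝ) (u v : Coef d) : Coef d :=
  fun k => ∑' n : ℕ, conv (lowSum χ θ n u) (block χ θ n v) k

/-- Resonant term `π_0(u,v) = Σ_j Σ_{|i-j|≤1} Δ_i u Δ_j v`. -/
def resonant {d : ℕ} (χ θ : ℝ → ℝ) (u v : Coef d) : Coef d :=
  fun k => ∑' n : ℕ, ∑ m ∈ Finset.Icc (n - 1) (n + 1), conv (block χ θ m u) (block χ θ n v) k

/-- Heat semigroup `P_t = e^{tΔ}` on the torus. -/
def heat {d : ℕ} (t : ℝ) (c : Coef d) : Coef d :=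
  fun k => (Real.exp (-t * knorm k ^ 2) : ℂ) * c k

/-- `(χ, θ)` is a (radial) Littlewood–Paley pair: smooth, nonnegative, `χ` supported in a ball,
`θ` supported in an annulus, and `χ(ξ) + Σ_{j≥0} θ(2^{-j}ξ) = 1`. -/
structure IsLPPair (χ θ : ℝ → ℝ) : Prop where
  chi_nonneg : ∀ r, 0 ≤ χ r
  theta_nonneg : ∀ r, 0 ≤ θ r
  chi_smooth : ContDiff ℝ (⊤ : ℕ∞) χ
  theta_smooth : ContDiff ℝ (⊤ : ℕ∞) θ
  chi_ball : ∃ R > 0, ∀ r : ℝ, R < |r| → χ r = 0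
  theta_annulus : ∃ a b : ℝ, 0 < a ∧ a < b ∧ ∀ r : ℝ, (|r| < a ∨ b < |r|) → θ r = 0
  partition : ∀ r : ℝ, χ r + ∑' j : ℕ, θ ((2 : ℝ) ^ (-(j : ℝ)) * r) = 1

lemma exp_le_rpow_aux (ρ : ℝ) (hρ : 0 < ρ) :
    ∃ K : ℝ, 0 < K ∧ ∀ x : ℝ, 0 < x → Real.exp (-x) ≤ K * x ^ (-ρ) := by
  set n := ⌈ρ⌉₊ with hn
  refine ⟨(n.factorial : ℝ) + 1, by positivity, fun x hx => ?_⟩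
  have hxρ : 0 < x ^ ρ := Real.rpow_pos_of_pos hx ρ
  rw [Real.rpow_neg hx.le, ← div_eq_mul_inv, le_div_iff₀ hxρ]
  have key : x ^ ρ ≤ x ^ n + 1 := by
    rcases le_or_gt x 1 with h | h
    · have h1 : x ^ ρ ≤ 1 := Real.rpow_le_one hx.le h hρ.le
      have h2 : (0:ℝ) ≤ x ^ n := by positivity
      linarith
    · have h1 : x ^ ρ ≤ x ^ (n : ℝ) :=
        Real.rpow_le_rpow_of_exponent_le h.le (Nat.le_ceil ρ)
      rw [Real.rpow_natCast] at h1
      linarith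
  have hfac : (0:ℝ) < n.factorial := by positivity
  have hpow : x ^ n ≤ n.factorial * Real.exp x := by
    have single : x ^ n / n.factorial ≤ ∑ i ∈ Finset.range (n+1), x ^ i / i.factorial :=
      Finset.single_le_sum (f := fun i => x ^ i / (i.factorial : ℝ))
        (fun i _ => by positivity) (Finset.self_mem_range_succ n)
    have := (single.trans (Real.sum_le_exp_of_nonneg hx.le (n+1)))
    rw [div_le_iff₀ hfac] at this
    linarith [this]
  have hexp : Real.exp (-x) * Real.exp x = 1 := by
    rw [← Real.exp_add]; simp
  have hexple : Real.exp (-x) ≤ 1 := Real.exp_le_one_iff.mpr (by linarith)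
  have hexppos : 0 < Real.exp (-x) := Real.exp_pos _
  calc Real.exp (-x) * x ^ ρ ≤ Real.exp (-x) * (x ^ n + 1) := by
        exact mul_le_mul_of_nonneg_left key hexppos.le
    _ = Real.exp (-x) * x ^ n + Real.exp (-x) := by ring
    _ ≤ Real.exp (-x) * (n.factorial * Real.exp x) + 1 := by
        have := mul_le_mul_of_nonneg_left hpow hexppos.le
        linarith
    _ = (n.factorial : ℝ) * (Real.exp (-x) * Real.exp x) + 1 := by ring
    _ = (n.factorial : ℝ) + 1 := by rw [hexp, mul_one]

lemma knorm_nonneg {d : ℕ} (k : Fin d → ℤ) : 0 ≤ knorm k := Real.sqrt_nonneg _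

lemma one_le_knorm {k : Fin 3 → ℤ} (hk : k ≠ 0) : 1 ≤ knorm k := by
  obtain ⟨i, hi⟩ : ∃ i, k i ≠ 0 := by
    by_contra h; push_neg at h; exact hk (funext h)
  have h1 : (1:ℝ) ≤ ((k i : ℝ)) ^ 2 := by
    have h0 : (0:ℤ) < (k i) ^ 2 := by positivity
    have : (1:ℤ) ≤ (k i) ^ 2 := h0
    exact_mod_cast this
  have h2 : ((k i : ℝ)) ^ 2 ≤ ∑ j, ((k j : ℝ)) ^ 2 :=
    Finset.single_le_sum (f := fun j => ((k j : ℝ))^2) (fun j _ => by positivity) (Finset.mem_univ i)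
  calc (1:ℝ) = Real.sqrt 1 := by simp
    _ ≤ knorm k := Real.sqrt_le_sqrt (by linarith)

lemma knorm_sq_eq (k : Fin 3 → ℤ) : knorm k ^ 2 = ∑ i, ((k i : ℝ)) ^ 2 :=
  Real.sq_sqrt (by positivity)

lemma knorm_pointwise (ρ : ℝ) (hρ : 0 < ρ) {k : Fin 3 → ℤ} (hk : k ≠ 0) :
    knorm k ^ (-(3+ρ)) ≤ (2:ℝ) ^ ((3+ρ)/2) * ∏ i, (1 + ((k i:ℝ))^2) ^ (-((3+ρ)/6)) := by
  set s : ℝ := (3+ρ)/6 with hs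
  have hs0 : 0 < s := by positivity
  set A : ℝ := ∑ i, ((k i : ℝ)) ^ 2 with hA
  have hA1 : 1 ≤ A := by
    have h1 := one_le_knorm hk
    have h2 := knorm_sq_eq k
    rw [← hA] at h2
    nlinarith
  have hApos : 0 < A := by linarith
  have hk1 : knorm k ^ (-(3+ρ)) = A ^ (-(3*s)) := by
    rw [knorm, ← hA, Real.sqrt_eq_rpow, ← Real.rpow_mul hApos.le]
    congr 1
    rw [hs]; ring
  have hfac : ∀ i, 1 + ((k i:ℝ))^2 ≤ 2*A := by
    intro i
    have := Finset.single_le_sum (f := fun j => ((k j:ℝ))^2)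
      (fun j _ => by positivity) (Finset.mem_univ i)
    rw [← hA] at this
    have h' : ((k i:ℝ))^2 ≤ A := this
    linarith
  have hfacpos : ∀ i ∈ Finset.univ, (0:ℝ) ≤ 1 + ((k i:ℝ))^2 := fun i _ => by positivity
  have hprod : ∏ i, (1 + ((k i:ℝ))^2) ≤ (2*A)^3 := by
    calc ∏ i, (1 + ((k i:ℝ))^2) ≤ ∏ _i : Fin 3, (2*A) :=
          Finset.prod_le_prod hfacpos (fun i _ => hfac i)
      _ = (2*A)^3 := by rw [Finset.prod_const]; norm_num
  have hProdPos : 0 < ∏ i, (1 + ((k i:ℝ))^2) :=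
    Finset.prod_pos (fun i _ => by positivity)
  have hanti : ((2*A)^3 : ℝ) ^ (-s) ≤ (∏ i, (1 + ((k i:ℝ))^2)) ^ (-s) :=
    Real.rpow_le_rpow_of_nonpos hProdPos hprod (by linarith)
  have hlhs : ((2*A)^3 : ℝ) ^ (-s) = (2:ℝ) ^ (-(3*s)) * A ^ (-(3*s)) := by
    rw [← Real.rpow_natCast (2*A) 3, ← Real.rpow_mul (by linarith : (0:ℝ) ≤ 2*A),
      show ((3:ℕ):ℝ) * -s = -(3*s) by push_cast; ring,
      Real.mul_rpow (by norm_num : (0:ℝ) ≤ 2) hApos.le]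
  have hrhs : (∏ i, (1 + ((k i:ℝ))^2)) ^ (-s) = ∏ i, (1 + ((k i:ℝ))^2) ^ (-s) :=
    (Real.finset_prod_rpow _ _ hfacpos _).symm
  have h2pow : (2:ℝ) ^ ((3+ρ)/2) * (2:ℝ) ^ (-(3*s)) = 1 := by
    rw [← Real.rpow_add (by norm_num : (0:ℝ) < 2)]
    have : (3+ρ)/2 + -(3*s) = 0 := by rw [hs]; ring
    rw [this, Real.rpow_zero]
  have h2p : (0:ℝ) < (2:ℝ) ^ ((3+ρ)/2) := Real.rpow_pos_of_pos (by norm_num) _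
  calc knorm k ^ (-(3+ρ)) = A ^ (-(3*s)) := hk1
    _ = (2:ℝ) ^ ((3+ρ)/2) * ((2:ℝ) ^ (-(3*s)) * A ^ (-(3*s))) := by
        rw [← mul_assoc, h2pow, one_mul]
    _ ≤ (2:ℝ) ^ ((3+ρ)/2) * (∏ i, (1 + ((k i:ℝ))^2)) ^ (-s) := by
        rw [← hlhs]
        exact mul_le_mul_of_nonneg_left hanti h2p.le
    _ = (2:ℝ) ^ ((3+ρ)/2) * ∏ i, (1 + ((k i:ℝ))^2) ^ (-((3+ρ)/6)) := by rw [hrhs, hs]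

lemma tsum_pi_pow (f : ℤ → ℝ≥0∞) : ∀ d : ℕ, ∑' k : Fin d → ℤ, ∏ i, f (k i) = (∑' n : ℤ, f n) ^ d
  | 0 => by
    rw [tsum_eq_single (fun i => i.elim0) (fun b hb => absurd (Subsingleton.elim b _) hb)]
    simp
  | (d+1) => by
    rw [← (Fin.consEquiv (fun _ : Fin (d+1) => ℤ)).tsum_eq, ENNReal.tsum_prod']
    simp only [Fin.consEquiv_apply, Fin.prod_univ_succ, Fin.cons_zero, Fin.cons_succ]
    rw [pow_succ]
    calc ∑' (a : ℤ) (b : Fin d → ℤ), f a * ∏ i, f (b i)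
        = ∑' (a : ℤ), f a * ∑' b : Fin d → ℤ, ∏ i, f (b i) := by
          congr 1; ext a; exact ENNReal.tsum_mul_left
      _ = (∑' n : ℤ, f n) ^ d * ∑' n : ℤ, f n := by
          rw [ENNReal.tsum_mul_right, tsum_pi_pow f d]; ring

lemma coord_sum_finite (s : ℝ) (hs : 1/2 < s) :
    ∑' n : ℤ, ENNReal.ofReal ((1 + ((n:ℝ))^2) ^ (-s)) ≠ ⊤ := by
  have hb : 1 < 2*s := by linarith
  have hsum := Real.summable_abs_int_rpow hb
  have hbound : ∀ n : ℤ, ENNReal.ofReal ((1 + ((n:ℝ))^2) ^ (-s)) ≤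
      ENNReal.ofReal (|(n:ℝ)| ^ (-(2*s))) + (if n = 0 then 1 else 0) := by
    intro n
    rcases eq_or_ne n 0 with rfl | hn
    · simp
    · have hn1 : (1:ℝ) ≤ |(n:ℝ)| := by
        have : (1:ℤ) ≤ |n| := Int.one_le_abs hn
        exact_mod_cast this
      have habs : |(n:ℝ)| ^ (-(2*s)) = (((n:ℝ))^2) ^ (-s) := by
        rw [← sq_abs ((n:ℝ)), ← Real.rpow_natCast |(n:ℝ)| 2, ← Real.rpow_mul (abs_nonneg _)]
        congr 1; push_cast; ring
      have hpos : (0:ℝ) < ((n:ℝ))^2 := by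
        have : ((n:ℝ)) ≠ 0 := by exact_mod_cast hn
        positivity
      have hle : (((n:ℝ))^2) ≤ 1 + ((n:ℝ))^2 := by linarith
      have := Real.rpow_le_rpow_of_nonpos hpos hle (by linarith : -s ≤ 0)
      simp only [hn, if_false, add_zero]
      rw [habs]
      exact ENNReal.ofReal_le_ofReal this
  have h1 : ∑' n : ℤ, ENNReal.ofReal (|(n:ℝ)| ^ (-(2*s))) ≠ ⊤ := by
    rw [← ENNReal.ofReal_tsum_of_nonneg (fun n => Real.rpow_nonneg (abs_nonneg _) _) hsum]
    exact ENNReal.ofReal_ne_top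
  have h2 : ∑' n : ℤ, (if n = 0 then (1:ℝ≥0∞) else 0) = 1 := tsum_ite_eq 0 1
  have hle : ∑' n : ℤ, ENNReal.ofReal ((1 + ((n:ℝ))^2) ^ (-s))
      ≤ (∑' n : ℤ, ENNReal.ofReal (|(n:ℝ)| ^ (-(2*s)))) + ∑' n : ℤ, (if n = 0 then (1:ℝ≥0∞) else 0) := by
    calc ∑' n : ℤ, ENNReal.ofReal ((1 + ((n:ℝ))^2) ^ (-s))
        ≤ ∑' n : ℤ, (ENNReal.ofReal (|(n:ℝ)| ^ (-(2*s))) + (if n = 0 then 1 else 0)) :=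
          ENNReal.tsum_le_tsum hbound
      _ = _ := ENNReal.tsum_add
  exact ne_top_of_le_ne_top (by rw [h2]; exact ENNReal.add_ne_top.mpr ⟨h1, ENNReal.one_ne_top⟩) hle

lemma lattice_sum_finite (ρ : ℝ) (hρ : 0 < ρ) :
    ∑' k : {k : Fin 3 → ℤ // k ≠ 0}, ENNReal.ofReal (knorm (k : Fin 3 → ℤ) ^ (-(3+ρ))) ≠ ⊤ := by
  set s : ℝ := (3+ρ)/6 with hs
  set F : ℤ → ℝ≥0∞ := fun n => ENNReal.ofReal ((1 + ((n:ℝ))^2) ^ (-s)) with hF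
  have hbound : ∀ k : {k : Fin 3 → ℤ // k ≠ 0},
      ENNReal.ofReal (knorm (k : Fin 3 → ℤ) ^ (-(3+ρ))) ≤
      ENNReal.ofReal ((2:ℝ) ^ ((3+ρ)/2)) * ∏ i, F ((k : Fin 3 → ℤ) i) := by
    intro k
    have := knorm_pointwise ρ hρ k.2
    calc ENNReal.ofReal (knorm (k : Fin 3 → ℤ) ^ (-(3+ρ)))
        ≤ ENNReal.ofReal ((2:ℝ) ^ ((3+ρ)/2) * ∏ i, (1 + (((k:Fin 3 → ℤ) i:ℝ))^2) ^ (-((3+ρ)/6))) :=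
          ENNReal.ofReal_le_ofReal this
      _ = ENNReal.ofReal ((2:ℝ) ^ ((3+ρ)/2)) * ENNReal.ofReal (∏ i, (1 + (((k:Fin 3 → ℤ) i:ℝ))^2) ^ (-((3+ρ)/6))) := by
          rw [ENNReal.ofReal_mul (by positivity)]
      _ = ENNReal.ofReal ((2:ℝ) ^ ((3+ρ)/2)) * ∏ i, F ((k : Fin 3 → ℤ) i) := by
          rw [ENNReal.ofReal_prod_of_nonneg (fun i _ => by positivity)]
  have hstep : ∑' k : {k : Fin 3 → ℤ // k ≠ 0}, ENNReal.ofReal (knorm (k : Fin 3 → ℤ) ^ (-(3+ρ)))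
      ≤ ENNReal.ofReal ((2:ℝ) ^ ((3+ρ)/2)) * (∑' n : ℤ, F n) ^ 3 := by
    calc ∑' k : {k : Fin 3 → ℤ // k ≠ 0}, ENNReal.ofReal (knorm (k : Fin 3 → ℤ) ^ (-(3+ρ)))
        ≤ ∑' k : {k : Fin 3 → ℤ // k ≠ 0},
            ENNReal.ofReal ((2:ℝ) ^ ((3+ρ)/2)) * ∏ i, F ((k : Fin 3 → ℤ) i) :=
          ENNReal.tsum_le_tsum hbound
      _ ≤ ∑' k : Fin 3 → ℤ, ENNReal.ofReal ((2:ℝ) ^ ((3+ρ)/2)) * ∏ i, F (k i) :=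
          ENNReal.tsum_comp_le_tsum_of_injective Subtype.val_injective _
      _ = ENNReal.ofReal ((2:ℝ) ^ ((3+ρ)/2)) * (∑' n : ℤ, F n) ^ 3 := by
          rw [ENNReal.tsum_mul_left, tsum_pi_pow]
  intro htop
  rw [htop] at hstep
  have hF3 : (∑' n : ℤ, F n) ^ 3 ≠ ⊤ := by
    have := coord_sum_finite s (by rw [hs]; linarith)
    exact ENNReal.pow_ne_top this
  exact (ENNReal.mul_ne_top ENNReal.ofReal_ne_top hF3) (top_le_iff.mp hstep)

lemma main_pointwise (ρ K : ℝ) (hρ : 0 < ρ) (hK : 0 < K)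
    (hKb : ∀ x : ℝ, 0 < x → Real.exp (-x) ≤ K * x ^ (-ρ))
    {k1 k2 : Fin 3 → ℤ} (h1 : k1 ≠ 0) (h2 : k2 ≠ 0) {t : ℝ} (ht : 0 < t) :
    Real.exp (-t * (knorm k1 ^ 2 + knorm k2 ^ 2 + knorm (k1 + k2) ^ 2)) /
      (knorm k1 ^ 2 * knorm k2 ^ 2 * (knorm k1 ^ 2 + knorm k2 ^ 2 + knorm (k1 + k2) ^ 2)) ≤
    (K * t ^ (-ρ)) * (knorm k1 ^ (-(3+ρ)) * knorm k2 ^ (-(3+ρ))) := by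
  set a := knorm k1 with hadef
  set b := knorm k2 with hbdef
  set c := knorm (k1 + k2) with hcdef
  have ha : 1 ≤ a := one_le_knorm h1
  have hb : 1 ≤ b := one_le_knorm h2
  have hc : 0 ≤ c := Real.sqrt_nonneg _
  set L : ℝ := a ^ 2 + b ^ 2 + c ^ 2 with hLdef
  have hL : 0 < L := by nlinarith
  have hab : a * b ≤ L := by nlinarith
  have habpos : 0 < a * b := by nlinarith
  have hD : 0 < a ^ 2 * b ^ 2 * L := by positivity
  -- step 1
  have step1 : Real.exp (-t * L) ≤ K * t ^ (-ρ) * L ^ (-ρ) := by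
    have h := hKb (t * L) (by positivity)
    rw [Real.mul_rpow ht.le hL.le] at h
    rw [neg_mul]
    calc Real.exp (-(t * L)) ≤ K * (t ^ (-ρ) * L ^ (-ρ)) := h
      _ = K * t ^ (-ρ) * L ^ (-ρ) := by ring
  -- step 2
  have key : a ^ (3+ρ) * b ^ (3+ρ) ≤ a ^ 2 * b ^ 2 * L ^ (1+ρ) := by
    have h3 : (a * b) ^ (1+ρ) ≤ L ^ (1+ρ) :=
      Real.rpow_le_rpow habpos.le hab (by linarith)
    have hsplit : (a * b) ^ (1+ρ) = a ^ (1+ρ) * b ^ (1+ρ) :=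
      Real.mul_rpow (by linarith) (by linarith)
    have hae : a ^ (3+ρ) = a ^ 2 * a ^ (1+ρ) := by
      rw [← Real.rpow_natCast a 2, ← Real.rpow_add (by linarith : (0:ℝ) < a)]
      congr 1; push_cast; ring
    have hbe : b ^ (3+ρ) = b ^ 2 * b ^ (1+ρ) := by
      rw [← Real.rpow_natCast b 2, ← Real.rpow_add (by linarith : (0:ℝ) < b)]
      congr 1; push_cast; ring
    calc a ^ (3+ρ) * b ^ (3+ρ) = a ^ 2 * b ^ 2 * (a * b) ^ (1+ρ) := by
          rw [hae, hbe, hsplit]; ring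
      _ ≤ a ^ 2 * b ^ 2 * L ^ (1+ρ) := by
          apply mul_le_mul_of_nonneg_left h3 (by positivity)
  have step2 : L ^ (-ρ) / (a ^ 2 * b ^ 2 * L) ≤ a ^ (-(3+ρ)) * b ^ (-(3+ρ)) := by
    have hLρ : 0 < L ^ ρ := Real.rpow_pos_of_pos hL ρ
    have e1 : L ^ (-ρ) / (a ^ 2 * b ^ 2 * L) = (a ^ 2 * b ^ 2 * L ^ (1+ρ))⁻¹ := by
      rw [Real.rpow_neg hL.le, Real.rpow_add hL, Real.rpow_one]
      field_simp
    have e2 : a ^ (-(3+ρ)) * b ^ (-(3+ρ)) = (a ^ (3+ρ) * b ^ (3+ρ))⁻¹ := by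
      rw [Real.rpow_neg (by linarith), Real.rpow_neg (by linarith), mul_inv]
    rw [e1, e2]
    apply inv_anti₀
    · positivity
    · exact key
  calc Real.exp (-t * L) / (a ^ 2 * b ^ 2 * L)
      ≤ (K * t ^ (-ρ) * L ^ (-ρ)) / (a ^ 2 * b ^ 2 * L) := by
        exact (div_le_div_iff_of_pos_right hD).mpr step1
    _ = (K * t ^ (-ρ)) * (L ^ (-ρ) / (a ^ 2 * b ^ 2 * L)) := by ring
    _ ≤ (K * t ^ (-ρ)) * (a ^ (-(3+ρ)) * b ^ (-(3+ρ))) := by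
        apply mul_le_mul_of_nonneg_left step2 (by positivity)

/-- Uniform bound `Σ e^{-t(|k₁|²+|k₂|²+|k₁+k₂|²)}/(…) ≤ C t^{-ρ}` on `(0,1]`. -/
theorem second_constant_time_bound (ρ : ℝ) (hρ : 0 < ρ) :
    ∃ C : ℝ, 0 < C ∧ ∀ t : ℝ, t ∈ Set.Ioc (0:ℝ) 1 →
      ∑' p : {k : Fin 3 → ℤ // k ≠ 0} × {k : Fin 3 → ℤ // k ≠ 0},
        ENNReal.ofReal
          (Real.exp (-t * (knorm (p.1 : Fin 3 → ℤ) ^ 2 + knorm (p.2 : Fin 3 → ℤ) ^ 2 +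
              knorm ((p.1 : Fin 3 → ℤ) + (p.2 : Fin 3 → ℤ)) ^ 2)) /
            (knorm (p.1 : Fin 3 → ℤ) ^ 2 * knorm (p.2 : Fin 3 → ℤ) ^ 2 *
              (knorm (p.1 : Fin 3 → ℤ) ^ 2 + knorm (p.2 : Fin 3 → ℤ) ^ 2 +
                knorm ((p.1 : Fin 3 → ℤ) + (p.2 : Fin 3 → ℤ)) ^ 2))) ≤
        ENNReal.ofReal (C * t ^ (-ρ)) := by
  obtain ⟨K, hK, hKb⟩ := exp_le_rpow_aux ρ hρ
  set g : {k : Fin 3 → ℤ // k ≠ 0} → ℝ≥0∞ :=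
    fun k => ENNReal.ofReal (knorm (k : Fin 3 → ℤ) ^ (-(3+ρ))) with hg
  set S : ℝ≥0∞ := ∑' k, g k with hSdef
  have hS : S ≠ ⊤ := lattice_sum_finite ρ hρ
  have hSS : S * S ≠ ⊤ := ENNReal.mul_ne_top hS hS
  set M : ℝ := (S * S).toReal with hM
  have hM0 : 0 ≤ M := ENNReal.toReal_nonneg
  refine ⟨K * M + 1, by positivity, fun t ht => ?_⟩
  obtain ⟨ht0, ht1⟩ := ht
  have htρ : 0 ≤ t ^ (-ρ) := Real.rpow_nonneg ht0.le _
  have hKt : 0 ≤ K * t ^ (-ρ) := mul_nonneg hK.le htρ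
  calc ∑' p : {k : Fin 3 → ℤ // k ≠ 0} × {k : Fin 3 → ℤ // k ≠ 0},
        ENNReal.ofReal
          (Real.exp (-t * (knorm (p.1 : Fin 3 → ℤ) ^ 2 + knorm (p.2 : Fin 3 → ℤ) ^ 2 +
              knorm ((p.1 : Fin 3 → ℤ) + (p.2 : Fin 3 → ℤ)) ^ 2)) /
            (knorm (p.1 : Fin 3 → ℤ) ^ 2 * knorm (p.2 : Fin 3 → ℤ) ^ 2 *
              (knorm (p.1 : Fin 3 → ℤ) ^ 2 + knorm (p.2 : Fin 3 → ℤ) ^ 2 +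
                knorm ((p.1 : Fin 3 → ℤ) + (p.2 : Fin 3 → ℤ)) ^ 2)))
      ≤ ∑' p : {k : Fin 3 → ℤ // k ≠ 0} × {k : Fin 3 → ℤ // k ≠ 0},
          ENNReal.ofReal (K * t ^ (-ρ)) * (g p.1 * g p.2) := by
        apply ENNReal.tsum_le_tsum
        intro p
        have hreal := main_pointwise ρ K hρ hK hKb p.1.2 p.2.2 ht0
        calc ENNReal.ofReal _ ≤ ENNReal.ofReal ((K * t ^ (-ρ)) *
              (knorm (p.1 : Fin 3 → ℤ) ^ (-(3+ρ)) * knorm (p.2 : Fin 3 → ℤ) ^ (-(3+ρ)))) :=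
            ENNReal.ofReal_le_ofReal hreal
          _ = ENNReal.ofReal (K * t ^ (-ρ)) * (g p.1 * g p.2) := by
            rw [ENNReal.ofReal_mul hKt,
              ENNReal.ofReal_mul (Real.rpow_nonneg (knorm_nonneg _) _)]
    _ = ENNReal.ofReal (K * t ^ (-ρ)) * (S * S) := by
        rw [ENNReal.tsum_mul_left]
        congr 1
        rw [ENNReal.tsum_prod']
        calc ∑' (a : {k : Fin 3 → ℤ // k ≠ 0}) (b : {k : Fin 3 → ℤ // k ≠ 0}), g a * g b
            = ∑' (a : {k : Fin 3 → ℤ // k ≠ 0}), g a * S := by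
              congr 1; ext a; exact ENNReal.tsum_mul_left
          _ = S * S := ENNReal.tsum_mul_right
    _ ≤ ENNReal.ofReal ((K * M + 1) * t ^ (-ρ)) := by
        rw [← ENNReal.ofReal_toReal hSS, ← ENNReal.ofReal_mul hKt, ← hM]
        apply ENNReal.ofReal_le_ofReal
        nlinarith
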